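/- (Second-order moment expansion for the asymmetric density, eqs. 45–47) Let σ > 0, let q be an odd integer with q ≥ 3, let p be an even integer with p > q, fix a ∈ ℝ and b > 0, and let k be an even nonnegative integer. Then, as t → 0 from the right, ∫_ℝ p_G(x) x^k exp(t a x^q − t b x^p) dx = (k−1)!! σ^k − t b (p+k−1)!! σ^{p+k} + t² ((a²/2)(2q+k−1)!! σ^{2q+k} + (b²/2)(2p+k−1)!! σ^{2p+k}) + O(t³). -/

import Mathlib

open MeasureTheory Real Filter Topology Asymptotics

/-- The centered Gaussian density with standard deviation `σ`. -/
noncomputable def pG (σ x : ℝ) : ℝ :=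
  (1 / (Real.sqrt (2 * Real.pi) * σ)) * Real.exp (-x ^ 2 / (2 * σ ^ 2))

/-!
Write `v x = a x^q - b x^p`. Since `p` is even, `p > q` and `b > 0`, `v` is bounded above by
some `D ≥ 0`, so for `0 < t ≤ 1` the remainder of the second order Taylor expansion of
`exp (t v)` is at most `(3 + e^D) t³ |v|³`. Integrated against `p_G(x) x^k` this remainder is
`O(t³)`, because `p_G` has moments of all orders. The Taylor polynomial integrates to the
stated expression: the Gaussian moments are computed by integration by parts, and the cross
terms `x^(q+k)` and `x^(p+q+k)` have odd degree, so their moments vanish.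
-/

open Polynomial
open scoped Nat

section GaussianMoments

variable {σ : ℝ}

lemma pG_eq_mul_exp (σ x : ℝ) :
    pG σ x = (1 / (√(2 * π) * σ)) * exp (-(1 / (2 * σ ^ 2)) * x ^ 2) := by
  rw [pG]; ring_nf

lemma pG_neg (σ x : ℝ) : pG σ (-x) = pG σ x := by
  rw [pG, pG, neg_sq]

lemma integrable_pG_mul_pow (hσ : 0 < σ) (m : ℕ) :
    Integrable (fun x => pG σ x * x ^ m) := by
  have h := integrable_rpow_mul_exp_neg_mul_sq (b := 1 / (2 * σ ^ 2)) (by positivity)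
    (s := m) (by linarith [m.cast_nonneg (α := ℝ)])
  refine (h.const_mul (1 / (√(2 * π) * σ))).congr (.of_forall fun x => ?_)
  simp only [rpow_natCast, pG_eq_mul_exp]
  ring

lemma integrable_pG_mul_eval (hσ : 0 < σ) (P : ℝ[X]) :
    Integrable (fun x => pG σ x * P.eval x) := by
  induction P using Polynomial.induction_on' with
  | add P Q hP hQ =>
    simp only [eval_add, mul_add]
    exact hP.add hQ
  | monomial n c => simpa [mul_left_comm] using (integrable_pG_mul_pow hσ n).const_mul c

lemma integral_pG (hσ : 0 < σ) : ∫ x, pG σ x = 1 := by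
  have hπ : π / (1 / (2 * σ ^ 2)) = (√(2 * π) * σ) ^ 2 := by
    rw [mul_pow, sq_sqrt (by positivity)]; field_simp
  have hs : 0 < √(2 * π) := by positivity
  simp_rw [pG_eq_mul_exp]
  rw [integral_const_mul, integral_gaussian, hπ, sqrt_sq (by positivity)]
  field_simp

lemma hasDerivAt_pG (σ x : ℝ) : HasDerivAt (pG σ) (-(x / σ ^ 2) * pG σ x) x := by
  have h : HasDerivAt (fun x => -x ^ 2 / (2 * σ ^ 2)) (-(2 * x) / (2 * σ ^ 2)) x := by
    simpa using (hasDerivAt_pow 2 x).neg.div_const (2 * σ ^ 2)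
  refine (h.exp.const_mul (1 / (√(2 * π) * σ))).congr_deriv ?_
  unfold pG
  field_simp

lemma integral_pG_mul_pow_add_two (hσ : 0 < σ) (m : ℕ) :
    ∫ x, pG σ x * x ^ (m + 2) = (m + 1) * σ ^ 2 * ∫ x, pG σ x * x ^ m := by
  have hderiv : ∀ x, HasDerivAt (fun x => pG σ x * x ^ (m + 1))
      ((m + 1) * (pG σ x * x ^ m) - 1 / σ ^ 2 * (pG σ x * x ^ (m + 2))) x := by
    intro x
    refine ((hasDerivAt_pG σ x).mul (hasDerivAt_pow (m + 1) x)).congr_deriv ?_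
    push_cast
    field_simp
    ring
  have hint := integrable_pG_mul_pow hσ
  have hzero := integral_eq_zero_of_hasDerivAt_of_integrable hderiv
    (((hint m).const_mul _).sub ((hint (m + 2)).const_mul _)) (hint (m + 1))
  rw [integral_sub ((hint m).const_mul _) ((hint (m + 2)).const_mul _), integral_const_mul,
    integral_const_mul, sub_eq_zero] at hzero
  field_simp at hzero
  linarith

lemma integral_pG_mul_pow_of_even (hσ : 0 < σ) {m : ℕ} (hm : Even m) :
    ∫ x, pG σ x * x ^ m = (m - 1)‼ * σ ^ m := by
  obtain ⟨n, rfl⟩ := hm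
  induction n with
  | zero => simpa using integral_pG hσ
  | succ n ih =>
    rw [show n + 1 + (n + 1) = n + n + 2 by ring, integral_pG_mul_pow_add_two hσ, ih,
      show n + n + 2 - 1 = n + n + 1 by omega, Nat.doubleFactorial_add_one]
    push_cast
    ring

lemma integral_pG_mul_pow_of_odd (σ : ℝ) {m : ℕ} (hm : Odd m) :
    ∫ x, pG σ x * x ^ m = 0 := by
  have h := integral_neg_eq_self (fun x => pG σ x * x ^ m) volume
  simp only [pG_neg, hm.neg_pow, mul_neg, integral_neg] at h
  linarith

end GaussianMoments

lemma exists_forall_mul_pow_sub_mul_pow_le (a : ℝ) {b : ℝ} (hb : 0 < b) {q p : ℕ} (hqp : q < p)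
    (hp : Even p) : ∃ D, ∀ x : ℝ, a * x ^ q - b * x ^ p ≤ D := by
  set R := max 1 (|a| / b)
  refine ⟨|a| * R ^ q, fun x => ?_⟩
  have hax : a * x ^ q ≤ |a| * |x| ^ q := by
    rw [← abs_pow, ← abs_mul]; exact le_abs_self _
  have hxp : b * x ^ p = b * |x| ^ p := by rw [hp.pow_abs]
  rcases le_total |x| R with hxR | hRx
  · have : |a| * |x| ^ q ≤ |a| * R ^ q := by gcongr
    have : 0 ≤ b * |x| ^ p := by positivity
    linarith
  · have h1 : 1 ≤ |x| := (le_max_left _ _).trans hRx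
    have hab : |a| ≤ b * |x| ^ (p - q) := by
      rw [← div_le_iff₀' hb]
      exact (le_max_right _ _).trans (hRx.trans (le_self_pow₀ h1 (by omega)))
    have : |a| * |x| ^ q ≤ b * |x| ^ p := by
      calc |a| * |x| ^ q ≤ b * |x| ^ (p - q) * |x| ^ q := by gcongr
        _ = b * |x| ^ p := by rw [mul_assoc, ← pow_add, Nat.sub_add_cancel hqp.le]
    have : 0 ≤ |a| * R ^ q := by positivity
    linarith

lemma abs_exp_sub_one_sub_id_sub_sq_div_two_le {u D : ℝ} (hD : 0 ≤ D) (hu : u ≤ D) :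
    |exp u - 1 - u - u ^ 2 / 2| ≤ (3 + exp D) * |u| ^ 3 := by
  have hD1 : 1 ≤ exp D := one_le_exp hD
  rcases le_or_gt |u| 1 with hu1 | hu1
  · have h := Real.exp_bound hu1 (n := 3) (by norm_num)
    norm_num [Finset.sum_range_succ, Nat.factorial] at h
    have : 0 ≤ |u| ^ 3 := by positivity
    rw [show exp u - 1 - u - u ^ 2 / 2 = exp u - (1 + u + u ^ 2 / 2) by ring]
    nlinarith
  · have hu3 : 1 ≤ |u| ^ 3 := one_le_pow₀ hu1.le
    have hu13 : |u| ≤ |u| ^ 3 := le_self_pow₀ hu1.le (by norm_num)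
    have hu23 : u ^ 2 ≤ |u| ^ 3 := by
      rw [← sq_abs]; exact pow_le_pow_right₀ hu1.le (by norm_num)
    have hexp : exp u ≤ exp D := exp_le_exp.2 hu
    rw [abs_le]
    constructor <;> nlinarith [exp_pos u, neg_abs_le u, le_abs_self u]

theorem isBigO_integral_mul_exp_sub_taylor {α : Type*} [MeasurableSpace α] {μ : Measure α}
    {f v : α → ℝ} {D : ℝ} (hvD : ∀ x, v x ≤ D) (hv : AEStronglyMeasurable v μ)
    (hf : ∀ j ≤ 3, Integrable (fun x => f x * v x ^ j) μ) :
    (fun t : ℝ => ∫ x, f x * exp (t * v x) ∂μ -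
        (∫ x, f x ∂μ + t * ∫ x, f x * v x ∂μ + t ^ 2 / 2 * ∫ x, f x * v x ^ 2 ∂μ))
      =O[𝓝[>] 0] fun t => t ^ 3 := by
  have h0 : Integrable f μ := by simpa using hf 0 (by norm_num)
  have h1 : Integrable (fun x => f x * v x) μ := by simpa using hf 1 (by norm_num)
  have h2 := hf 2 (by norm_num)
  have h3 := hf 3 le_rfl
  set D' := max D 0
  have hD' : 0 ≤ D' := le_max_right _ _
  refine isBigO_iff.2 ⟨(3 + exp D') * ∫ x, ‖f x * v x ^ 3‖ ∂μ, ?_⟩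
  filter_upwards [Ioc_mem_nhdsGT zero_lt_one] with t ⟨ht0, ht1⟩
  have htv : ∀ x, t * v x ≤ D' := fun x =>
    calc t * v x ≤ t * D' := by gcongr; exact (hvD x).trans (le_max_left _ _)
      _ ≤ D' := mul_le_of_le_one_left hD' ht1
  have hexp : Integrable (fun x => f x * exp (t * v x)) μ := by
    refine (h0.norm.const_mul (exp D')).mono'
      (h0.aestronglyMeasurable.mul (continuous_exp.comp_aestronglyMeasurable (hv.const_mul t)))
      (.of_forall fun x => ?_)
    rw [norm_mul, norm_of_nonneg (exp_pos _).le, mul_comm]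
    gcongr
    exact htv x
  have hlin : Integrable (fun x => f x + t * (f x * v x)) μ := h0.add (h1.const_mul t)
  have hpoly : Integrable (fun x => f x + t * (f x * v x) + t ^ 2 / 2 * (f x * v x ^ 2)) μ :=
    hlin.add (h2.const_mul _)
  have hsplit : ∫ x, f x * exp (t * v x) ∂μ -
        (∫ x, f x ∂μ + t * ∫ x, f x * v x ∂μ + t ^ 2 / 2 * ∫ x, f x * v x ^ 2 ∂μ)
      = ∫ x, f x * (exp (t * v x) - 1 - t * v x - (t * v x) ^ 2 / 2) ∂μ := by
    have h := integral_sub hexp hpoly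
    rw [integral_add hlin (h2.const_mul _), integral_add h0 (h1.const_mul t),
      integral_const_mul, integral_const_mul] at h
    rw [← h]
    congr 1; ext x; ring
  rw [hsplit, norm_of_nonneg (by positivity : (0 : ℝ) ≤ t ^ 3)]
  calc ‖∫ x, f x * (exp (t * v x) - 1 - t * v x - (t * v x) ^ 2 / 2) ∂μ‖
      ≤ ∫ x, (3 + exp D') * t ^ 3 * ‖f x * v x ^ 3‖ ∂μ := by
        refine norm_integral_le_of_norm_le (h3.norm.const_mul _) (.of_forall fun x => ?_)
        calc ‖f x * (exp (t * v x) - 1 - t * v x - (t * v x) ^ 2 / 2)‖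
            = ‖f x‖ * |exp (t * v x) - 1 - t * v x - (t * v x) ^ 2 / 2| := norm_mul _ _
          _ ≤ ‖f x‖ * ((3 + exp D') * |t * v x| ^ 3) := by
              gcongr; exact abs_exp_sub_one_sub_id_sub_sq_div_two_le hD' (htv x)
          _ = (3 + exp D') * t ^ 3 * ‖f x * v x ^ 3‖ := by
              rw [norm_mul, norm_pow, Real.norm_eq_abs (v x), abs_mul, abs_of_pos ht0]; ring
    _ = (3 + exp D') * (∫ x, ‖f x * v x ^ 3‖ ∂μ) * t ^ 3 := by
        rw [integral_const_mul]; ring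

section ExponentMoments

variable {σ : ℝ} {q p k : ℕ}

lemma integrable_pG_mul_pow_mul_sub_mul_pow_pow (hσ : 0 < σ) (a b : ℝ) (j : ℕ) :
    Integrable (fun x => pG σ x * x ^ k * (a * x ^ q - b * x ^ p) ^ j) := by
  have h := integrable_pG_mul_eval hσ (X ^ k * (C a * X ^ q - C b * X ^ p) ^ j)
  simp only [eval_mul, eval_pow, eval_sub, eval_C, eval_X] at h
  simpa only [mul_assoc] using h

lemma integral_pG_mul_pow_mul_sub_mul_pow (hσ : 0 < σ) (hq : Odd q) (hp : Even p)
    (hk : Even k) (a b : ℝ) :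
    ∫ x, pG σ x * x ^ k * (a * x ^ q - b * x ^ p) = -(b * (p + k - 1)‼ * σ ^ (p + k)) := by
  have h : ∀ x, pG σ x * x ^ k * (a * x ^ q - b * x ^ p)
      = a * (pG σ x * x ^ (q + k)) - b * (pG σ x * x ^ (p + k)) := fun x => by ring
  simp_rw [h]
  rw [integral_sub ((integrable_pG_mul_pow hσ _).const_mul _)
      ((integrable_pG_mul_pow hσ _).const_mul _), integral_const_mul, integral_const_mul,
    integral_pG_mul_pow_of_odd σ (hq.add_even hk), integral_pG_mul_pow_of_even hσ (hp.add hk)]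
  ring

lemma integral_pG_mul_pow_mul_sub_mul_pow_sq (hσ : 0 < σ) (hq : Odd q) (hp : Even p)
    (hk : Even k) (a b : ℝ) :
    ∫ x, pG σ x * x ^ k * (a * x ^ q - b * x ^ p) ^ 2
      = a ^ 2 * (2 * q + k - 1)‼ * σ ^ (2 * q + k)
        + b ^ 2 * (2 * p + k - 1)‼ * σ ^ (2 * p + k) := by
  have h : ∀ x, pG σ x * x ^ k * (a * x ^ q - b * x ^ p) ^ 2
      = a ^ 2 * (pG σ x * x ^ (2 * q + k)) - 2 * a * b * (pG σ x * x ^ (p + q + k))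
        + b ^ 2 * (pG σ x * x ^ (2 * p + k)) := fun x => by ring
  have hI : ∀ (c : ℝ) m, Integrable (fun x => c * (pG σ x * x ^ m)) :=
    fun c m => (integrable_pG_mul_pow hσ m).const_mul c
  have hI2 : Integrable (fun x => a ^ 2 * (pG σ x * x ^ (2 * q + k))
      - 2 * a * b * (pG σ x * x ^ (p + q + k))) := (hI _ _).sub (hI _ _)
  simp_rw [h]
  rw [integral_add hI2 (hI _ _), integral_sub (hI _ _) (hI _ _),
    integral_const_mul, integral_const_mul, integral_const_mul,
    integral_pG_mul_pow_of_even hσ ((even_two_mul q).add hk),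
    integral_pG_mul_pow_of_odd σ ((hp.add_odd hq).add_even hk),
    integral_pG_mul_pow_of_even hσ ((even_two_mul p).add hk)]
  ring

end ExponentMoments

theorem stmt16_general (σ : ℝ) (hσ : 0 < σ)
    (q : ℕ) (hqo : Odd q)
    (p : ℕ) (hpe : Even p) (hqp : q < p)
    (a : ℝ) (b : ℝ) (hb : 0 < b)
    (k : ℕ) (hk : Even k) :
    (fun t : ℝ =>
        (∫ x : ℝ, pG σ x * x ^ k * Real.exp (t * a * x ^ q - t * b * x ^ p)) -
          ((Nat.doubleFactorial (k - 1) : ℝ) * σ ^ k -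
            t * b * (Nat.doubleFactorial (p + k - 1) : ℝ) * σ ^ (p + k) +
            t ^ 2 * (a ^ 2 / 2 * (Nat.doubleFactorial (2 * q + k - 1) : ℝ) * σ ^ (2 * q + k) +
              b ^ 2 / 2 * (Nat.doubleFactorial (2 * p + k - 1) : ℝ) * σ ^ (2 * p + k))))
      =O[𝓝[>] (0 : ℝ)] fun t => t ^ 3 := by
  obtain ⟨D, hD⟩ := exists_forall_mul_pow_sub_mul_pow_le a hb hqp hpe
  have key := isBigO_integral_mul_exp_sub_taylor (μ := volume) (f := fun x => pG σ x * x ^ k)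
    hD (by fun_prop) fun j _ => integrable_pG_mul_pow_mul_sub_mul_pow_pow hσ a b j
  refine key.congr_left fun t => ?_
  simp only [integral_pG_mul_pow_of_even hσ hk,
    integral_pG_mul_pow_mul_sub_mul_pow hσ hqo hpe hk,
    integral_pG_mul_pow_mul_sub_mul_pow_sq hσ hqo hpe hk,
    show ∀ x : ℝ, t * (a * x ^ q - b * x ^ p) = t * a * x ^ q - t * b * x ^ p from
      fun x => by ring]
  ring

theorem stmt16 (σ : ℝ) (hσ : 0 < σ)
    (q : ℕ) (hq : 3 ≤ q) (hqo : Odd q)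
    (p : ℕ) (hpe : Even p) (hqp : q < p)
    (a : ℝ) (b : ℝ) (hb : 0 < b)
    (k : ℕ) (hk : Even k) :
    (fun t : ℝ =>
        (∫ x : ℝ, pG σ x * x ^ k * Real.exp (t * a * x ^ q - t * b * x ^ p)) -
          ((Nat.doubleFactorial (k - 1) : ℝ) * σ ^ k -
            t * b * (Nat.doubleFactorial (p + k - 1) : ℝ) * σ ^ (p + k) +
            t ^ 2 * (a ^ 2 / 2 * (Nat.doubleFactorial (2 * q + k - 1) : ℝ) * σ ^ (2 * q + k) +
              b ^ 2 / 2 * (Nat.doubleFactorial (2 * p + k - 1) : ℝ) * σ ^ (2 * p + k))))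
      =O[𝓝[>] (0 : ℝ)] fun t => t ^ 3 :=
  stmt16_general σ hσ q hqo p hpe hqp a b hb k hk
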